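/- arXiv:0801.0086 — 2 statements merged into one kernel-verified Lean document; each statement's English description precedes it below -/
import Mathlib

section
/- If Γ_E(R) is a fan graph K_{n,1} with at least four vertices, then R has a unique associated prime p, p³ = 0, and the characteristic of R is 2, 4, or 8. -/
/-!
Let `z` represent the centre and `p = ann z`. Since leaves are pairwise non-adjacent, a leaf `x`
with `x² ≠ 0` has `ann x` inside the annihilator of every leaf, so two of any three leaves,
`u` and `w`, square to zero. Testing `u + z` against the fan shape gives `z² = 0`; then every zero
divisor kills `z`, so `p` is prime and contains every associated prime, and conversely lies in
every prime once it is nilpotent. A nonzero `g` killing both `u` and `w` cannot be a leaf, so it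
lies in the centre class and `g p = 0`; applied to `uw`, `xu`, `xw`, `xy` for `x, y ∈ p` this
gives `p³ = 0`. Finally `u + w` and `u - w` are adjacent leaves, hence the same vertex, which
forces `2uw = 0`: so `2 ∈ p` and `8 = 2³ ∈ p³ = 0`.
-/

open scoped Classical

noncomputable section

/-- The annihilator ideal of an element `x` of a commutative ring `R`. -/
def ann (R : Type*) [CommRing R] (x : R) : Ideal R := Ideal.torsionOf R R x

/-- The type of nonzero zero divisors of `R`. -/
def ZD (R : Type*) [CommRing R] : Type _ :=
  {x : R // x ≠ 0 ∧ ∃ y : R, y ≠ 0 ∧ x * y = 0}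

/-- Two zero divisors are equivalent iff they have the same annihilator. -/
instance annSetoid (R : Type*) [CommRing R] : Setoid (ZD R) :=
  ⟨fun a b => ann R a.1 = ann R b.1,
   fun _ => rfl, Eq.symm, Eq.trans⟩

/-- The vertex set of `Γ_E(R)`: equivalence classes of nonzero zero divisors. -/
def GammaEV (R : Type*) [CommRing R] : Type _ := Quotient (annSetoid R)

/-- The class of a nonzero zero divisor. -/
def cls (R : Type*) [CommRing R] (a : ZD R) : GammaEV R :=
  Quotient.mk (annSetoid R) a

/-- The graph `Γ_E(R)` of equivalence classes of zero divisors. -/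
def gammaE (R : Type*) [CommRing R] : SimpleGraph (GammaEV R) where
  Adj u v := u ≠ v ∧ ∃ a b : ZD R, cls R a = u ∧ cls R b = v ∧ a.1 * b.1 = 0
  symm := by
    constructor
    rintro u v ⟨huv, a, b, ha, hb, hab⟩
    exact ⟨huv.symm, b, a, hb, ha, by rwa [mul_comm] at hab⟩
  loopless := by constructor; rintro u ⟨h, -⟩; exact h rfl

/-- `I` is a maximal element of the family `F = {ann x : 0 ≠ x ∈ R}`. -/
def MaxAnn (R : Type*) [CommRing R] (I : Ideal R) : Prop :=
  (∃ x : R, x ≠ 0 ∧ I = ann R x) ∧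
    ∀ y : R, y ≠ 0 → I ≤ ann R y → I = ann R y

section Annihilator

variable {R : Type*} [CommRing R]

@[simp]
theorem mem_ann {x m : R} : m ∈ ann R x ↔ m * x = 0 := by
  rw [ann, Ideal.mem_torsionOf_iff, smul_eq_mul]

theorem mul_eq_zero_of_ann_eq {a a' b : R} (h : ann R a = ann R a') (hab : a * b = 0) :
    a' * b = 0 := by
  have hb : b ∈ ann R a := mem_ann.2 (by rw [mul_comm, hab])
  rw [h, mem_ann, mul_comm] at hb
  exact hb

theorem ann_isPrime_of_forall_mul_eq_zero {z : R} (hz : z ≠ 0)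
    (hzd : ∀ b y : R, y ≠ 0 → b * y = 0 → b * z = 0) : (ann R z).IsPrime where
  ne_top' h := hz (by simpa using (h ▸ Submodule.mem_top : (1 : R) ∈ ann R z))
  mem_or_mem' {a b} hab := by
    rw [mem_ann] at hab ⊢
    by_cases hbz : b * z = 0
    · exact Or.inr hbz
    · exact Or.inl (hzd a (b * z) hbz (by rw [← hab, mul_assoc]))

theorem ann_eq_of_isPrime {z : R} (hzd : ∀ b y : R, y ≠ 0 → b * y = 0 → b * z = 0) {n : ℕ}
    (hnil : ann R z ^ n = ⊥) {y : R} (hy : y ≠ 0) (hq : (ann R y).IsPrime) :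
    ann R y = ann R z :=
  le_antisymm (fun m hm => mem_ann.2 (hzd m y hy (mem_ann.1 hm)))
    (hq.le_of_pow_le (hnil ▸ bot_le))

end Annihilator

theorem Ideal.pow_three_eq_bot_of_mul_mul_eq_zero {R : Type*} [CommRing R] {I : Ideal R}
    (h : ∀ x ∈ I, ∀ y ∈ I, ∀ m ∈ I, x * y * m = 0) : I ^ 3 = ⊥ := by
  rw [pow_three', eq_bot_iff, Ideal.mul_le]
  intro xy hxy m hm
  rw [Ideal.mem_bot]
  refine Submodule.mul_induction_on hxy (fun x hx y hy => h x hx y hy m hm) ?_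
  intro a b ha hb
  rw [add_mul, ha, hb, add_zero]

theorem ringChar_eq_two_or_four_or_eight {R : Type*} [Ring R] [Nontrivial R]
    (h : (8 : R) = 0) : ringChar R = 2 ∨ ringChar R = 4 ∨ ringChar R = 8 := by
  have hdvd : ringChar R ∣ 2 ^ 3 := ringChar.dvd (by exact_mod_cast h)
  obtain ⟨k, hk, hchar⟩ := (Nat.dvd_prime_pow Nat.prime_two).1 hdvd
  have hne : ringChar R ≠ 1 := CharP.ringChar_ne_one
  interval_cases k <;> simp_all

theorem Set.exists_three_ne_of_four_le_encard {α : Type*} (h : 4 ≤ (Set.univ : Set α).encard)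
    (c : α) : ∃ a b d : α, a ≠ c ∧ b ≠ c ∧ d ≠ c ∧ a ≠ b ∧ a ≠ d ∧ b ≠ d := by
  have h3 : 3 ≤ (Set.univ \ {c} : Set α).encard := by
    rw [← Set.encard_sdiff_singleton_add_one (Set.mem_univ c)] at h
    exact (ENat.add_le_add_iff_right ENat.one_ne_top).1 h
  obtain ⟨t, hts, ht⟩ := Set.exists_subset_encard_eq h3
  obtain ⟨a, b, d, hab, had, hbd, rfl⟩ := Set.encard_eq_three.1 ht
  simp only [Set.insert_subset_iff, Set.singleton_subset_iff, Set.mem_sdiff, Set.mem_univ,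
    Set.mem_singleton_iff, true_and] at hts
  exact ⟨a, b, d, hts.1, hts.2.1, hts.2.2, hab, had, hbd⟩

section Fan

variable {R : Type*} [CommRing R]

def IsLeaf (z x : R) : Prop :=
  x ≠ 0 ∧ (∃ y : R, y ≠ 0 ∧ x * y = 0) ∧ ann R x ≠ ann R z

/-- Ring-theoretic form of "`Γ_E(R)` is a fan graph centred at the class of `z`". -/
structure IsFanCenter (z : R) : Prop where
  ne_zero : z ≠ 0
  mul_eq_zero_of_isLeaf {x : R} : IsLeaf z x → x * z = 0
  ann_eq_of_mul_eq_zero {x y : R} : IsLeaf z x → IsLeaf z y → x * y = 0 → ann R x = ann R y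

namespace IsFanCenter

variable {z u w : R} (hz : IsFanCenter z)
include hz

theorem mul_ne_zero {x y : R} (hx : IsLeaf z x) (hy : IsLeaf z y) (hxy : ann R x ≠ ann R y) :
    x * y ≠ 0 :=
  fun h => hxy (hz.ann_eq_of_mul_eq_zero hx hy h)

theorem isLeaf_of_mul_eq_zero {s : R} (hw : IsLeaf z w) (hs : s * z = 0) (hws : w * s ≠ 0) :
    IsLeaf z s := by
  refine ⟨fun h => hws (by rw [h, mul_zero]), ⟨z, hz.ne_zero, hs⟩, fun h => hws ?_⟩
  rw [mul_comm]
  exact mul_eq_zero_of_ann_eq h.symm (by rw [mul_comm]; exact hz.mul_eq_zero_of_isLeaf hw)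

theorem ann_le_of_mul_self_ne_zero {x y : R} (hx : IsLeaf z x) (hy : IsLeaf z y)
    (hxx : x * x ≠ 0) : ann R x ≤ ann R y := by
  intro m hm
  rw [mem_ann] at hm ⊢
  by_cases hm0 : m = 0
  · rw [hm0, zero_mul]
  by_cases hmz : ann R m = ann R z
  · exact mul_eq_zero_of_ann_eq hmz.symm (by rw [mul_comm]; exact hz.mul_eq_zero_of_isLeaf hy)
  · have hmx := hz.ann_eq_of_mul_eq_zero ⟨hm0, ⟨x, hx.1, hm⟩, hmz⟩ hx hm
    exact absurd (mul_eq_zero_of_ann_eq hmx hm) hxx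

theorem mul_self_eq_zero_or {x y : R} (hx : IsLeaf z x) (hy : IsLeaf z y)
    (hxy : ann R x ≠ ann R y) : x * x = 0 ∨ y * y = 0 := by
  by_contra! h
  exact hxy (le_antisymm (hz.ann_le_of_mul_self_ne_zero hx hy h.1)
    (hz.ann_le_of_mul_self_ne_zero hy hx h.2))

theorem exists_isotropic_pair {x₁ x₂ x₃ : R} (h₁ : IsLeaf z x₁) (h₂ : IsLeaf z x₂)
    (h₃ : IsLeaf z x₃) (h₁₂ : ann R x₁ ≠ ann R x₂) (h₁₃ : ann R x₁ ≠ ann R x₃)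
    (h₂₃ : ann R x₂ ≠ ann R x₃) :
    ∃ u w : R, IsLeaf z u ∧ IsLeaf z w ∧ ann R u ≠ ann R w ∧ u * u = 0 ∧ w * w = 0 := by
  rcases hz.mul_self_eq_zero_or h₁ h₂ h₁₂ with e₁ | e₂
  · rcases hz.mul_self_eq_zero_or h₂ h₃ h₂₃ with e₂ | e₃
    · exact ⟨x₁, x₂, h₁, h₂, h₁₂, e₁, e₂⟩
    · exact ⟨x₁, x₃, h₁, h₃, h₁₃, e₁, e₃⟩
  · rcases hz.mul_self_eq_zero_or h₁ h₃ h₁₃ with e₁ | e₃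
    · exact ⟨x₁, x₂, h₁, h₂, h₁₂, e₁, e₂⟩
    · exact ⟨x₂, x₃, h₂, h₃, h₂₃, e₂, e₃⟩

theorem mul_eq_zero_of_zeroDivisor (hzz : z * z = 0) {b y : R} (hy : y ≠ 0) (hby : b * y = 0) :
    b * z = 0 := by
  by_cases hb : b = 0
  · rw [hb, zero_mul]
  by_cases hbz : ann R b = ann R z
  · exact mul_eq_zero_of_ann_eq hbz.symm hzz
  · exact hz.mul_eq_zero_of_isLeaf ⟨hb, ⟨y, hy, hby⟩, hbz⟩

variable (hu : IsLeaf z u) (hw : IsLeaf z w) (huw : ann R u ≠ ann R w)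
include hu hw huw

theorem mul_self_eq_zero (hu2 : u * u = 0) : z * z = 0 := by
  have huz := hz.mul_eq_zero_of_isLeaf hu
  have hwz := hz.mul_eq_zero_of_isLeaf hw
  by_cases hs : u + z = 0
  · rw [eq_neg_of_add_eq_zero_right hs, neg_mul_neg, hu2]
  by_cases hsz : ann R (u + z) = ann R z
  · refine absurd ?_ (hz.mul_ne_zero hw hu huw.symm)
    have := mul_eq_zero_of_ann_eq hsz.symm (by rw [mul_comm]; exact hwz)
    linear_combination this - hwz
  · have hsu : (u + z) * u = 0 := by linear_combination hu2 + huz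
    have := hz.mul_eq_zero_of_isLeaf ⟨hs, ⟨u, hu.1, hsu⟩, hsz⟩
    linear_combination this - huz

theorem ann_le_ann_of_mul_eq_zero {g : R} (hgu : g * u = 0) (hgw : g * w = 0) :
    ann R z ≤ ann R g := by
  by_cases hg : g = 0
  · rw [hg]
    intro m _
    rw [mem_ann, mul_zero]
  by_cases hgz : ann R g = ann R z
  · rw [hgz]
  · have hg' : IsLeaf z g := ⟨hg, ⟨u, hu.1, hgu⟩, hgz⟩
    exact absurd ((hz.ann_eq_of_mul_eq_zero hg' hu hgu).symm.trans
      (hz.ann_eq_of_mul_eq_zero hg' hw hgw)) huw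

theorem pow_three_ann_eq_bot (hu2 : u * u = 0) (hw2 : w * w = 0) : ann R z ^ 3 = ⊥ := by
  have kill : ∀ g, g * u = 0 → g * w = 0 → ∀ m ∈ ann R z, g * m = 0 := fun g hgu hgw m hm => by
    rw [mul_comm]
    exact mem_ann.1 (hz.ann_le_ann_of_mul_eq_zero hu hw huw hgu hgw hm)
  have huw_kill := kill (u * w) (by linear_combination w * hu2) (by linear_combination u * hw2)
  have hxu_kill : ∀ x ∈ ann R z, ∀ m ∈ ann R z, x * u * m = 0 := fun x hx =>
    kill _ (by linear_combination x * hu2) (by linear_combination huw_kill x hx)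
  have hxw_kill : ∀ x ∈ ann R z, ∀ m ∈ ann R z, x * w * m = 0 := fun x hx =>
    kill _ (by linear_combination huw_kill x hx) (by linear_combination x * hw2)
  refine Ideal.pow_three_eq_bot_of_mul_mul_eq_zero fun x hx y hy => kill _ ?_ ?_
  · linear_combination hxu_kill x hx y hy
  · linear_combination hxw_kill x hx y hy

theorem two_mul_mul_eq_zero (hu2 : u * u = 0) (hw2 : w * w = 0) : 2 * (u * w) = 0 := by
  have huz := hz.mul_eq_zero_of_isLeaf hu
  have hwz := hz.mul_eq_zero_of_isLeaf hw
  have hwu := hz.mul_ne_zero hw hu huw.symm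
  have hs : IsLeaf z (u + w) := hz.isLeaf_of_mul_eq_zero hw (by linear_combination huz + hwz)
    (by convert hwu using 1; linear_combination hw2)
  have hd : IsLeaf z (u - w) := hz.isLeaf_of_mul_eq_zero hw (by linear_combination huz - hwz)
    (by convert hwu using 1; linear_combination -hw2)
  have hsd : (u + w) * (u - w) = 0 := by linear_combination hu2 - hw2
  -- `u + w` and `u - w` are adjacent leaves, hence equal vertices, so `u + w` squares to zero.
  have hss := mul_eq_zero_of_ann_eq (hz.ann_eq_of_mul_eq_zero hs hd hsd).symm
    (by rw [mul_comm]; exact hsd)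
  linear_combination hss - hu2 - hw2

end IsFanCenter

end Fan

section Graph

variable {R : Type*} [CommRing R]

theorem cls_eq_cls_iff {a b : ZD R} : cls R a = cls R b ↔ ann R a.1 = ann R b.1 :=
  Quotient.eq

theorem mul_eq_zero_of_gammaE_adj {a b : ZD R} (h : (gammaE R).Adj (cls R a) (cls R b)) :
    a.1 * b.1 = 0 := by
  obtain ⟨-, a', b', ha, hb, hab⟩ := h
  have hba : b.1 * a'.1 = 0 := by
    rw [mul_comm] at hab
    exact mul_eq_zero_of_ann_eq (cls_eq_cls_iff.1 hb) hab
  rw [mul_comm] at hba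
  exact mul_eq_zero_of_ann_eq (cls_eq_cls_iff.1 ha) hba

theorem isLeaf_of_cls_ne {a z : ZD R} (h : cls R a ≠ cls R z) : IsLeaf z.1 a.1 :=
  ⟨a.2.1, a.2.2, mt cls_eq_cls_iff.2 h⟩

theorem isFanCenter_of_forall_adj (z : ZD R)
    (hcenter : ∀ v, v ≠ cls R z → (gammaE R).Adj (cls R z) v)
    (hindep : ∀ u v, u ≠ cls R z → v ≠ cls R z → ¬ (gammaE R).Adj u v) :
    IsFanCenter z.1 where
  ne_zero := z.2.1
  mul_eq_zero_of_isLeaf {x} hx := by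
    rw [mul_comm]
    exact mul_eq_zero_of_gammaE_adj
      (hcenter (cls R ⟨x, hx.1, hx.2.1⟩) (mt cls_eq_cls_iff.1 hx.2.2))
  ann_eq_of_mul_eq_zero {x y} hx hy hxy := by
    by_contra hne
    exact hindep _ _ (mt cls_eq_cls_iff.1 hx.2.2) (mt cls_eq_cls_iff.1 hy.2.2)
      ⟨mt cls_eq_cls_iff.1 hne, ⟨x, hx.1, hx.2.1⟩, ⟨y, hy.1, hy.2.1⟩, rfl, rfl, hxy⟩

theorem exists_three_leaves (hcard : 4 ≤ (Set.univ : Set (GammaEV R)).encard) (z : ZD R) :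
    ∃ x₁ x₂ x₃ : R, IsLeaf z.1 x₁ ∧ IsLeaf z.1 x₂ ∧ IsLeaf z.1 x₃ ∧
      ann R x₁ ≠ ann R x₂ ∧ ann R x₁ ≠ ann R x₃ ∧ ann R x₂ ≠ ann R x₃ := by
  obtain ⟨v₁, v₂, v₃, h₁, h₂, h₃, h₁₂, h₁₃, h₂₃⟩ :=
    Set.exists_three_ne_of_four_le_encard hcard (cls R z)
  obtain ⟨a₁, rfl⟩ := Quotient.exists_rep v₁
  obtain ⟨a₂, rfl⟩ := Quotient.exists_rep v₂
  obtain ⟨a₃, rfl⟩ := Quotient.exists_rep v₃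
  exact ⟨a₁.1, a₂.1, a₃.1, isLeaf_of_cls_ne h₁, isLeaf_of_cls_ne h₂, isLeaf_of_cls_ne h₃,
    mt cls_eq_cls_iff.2 h₁₂, mt cls_eq_cls_iff.2 h₁₃, mt cls_eq_cls_iff.2 h₂₃⟩

end Graph

theorem stmt11_general (R : Type*) [CommRing R]
    (hcard : 4 ≤ (Set.univ : Set (GammaEV R)).encard)
    (c : GammaEV R)
    (hcenter : ∀ v : GammaEV R, v ≠ c → (gammaE R).Adj c v)
    (hindep : ∀ u v : GammaEV R, u ≠ c → v ≠ c → ¬ (gammaE R).Adj u v) :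
    (∃ p : Ideal R, (p.IsPrime ∧ ∃ z : R, z ≠ 0 ∧ p = ann R z) ∧
      (∀ q : Ideal R, (q.IsPrime ∧ ∃ z : R, z ≠ 0 ∧ q = ann R z) → q = p) ∧
      p ^ 3 = ⊥) ∧
    (ringChar R = 2 ∨ ringChar R = 4 ∨ ringChar R = 8) := by
  obtain ⟨z, rfl⟩ := Quotient.exists_rep c
  have hz : IsFanCenter z.1 := isFanCenter_of_forall_adj z hcenter hindep
  obtain ⟨x₁, x₂, x₃, h₁, h₂, h₃, h₁₂, h₁₃, h₂₃⟩ := exists_three_leaves hcard z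
  obtain ⟨u, w, hu, hw, huw, hu2, hw2⟩ := hz.exists_isotropic_pair h₁ h₂ h₃ h₁₂ h₁₃ h₂₃
  have hzd : ∀ b y : R, y ≠ 0 → b * y = 0 → b * z.1 = 0 := fun _ _ =>
    hz.mul_eq_zero_of_zeroDivisor (hz.mul_self_eq_zero hu hw huw hu2)
  have hp3 : ann R z.1 ^ 3 = ⊥ := hz.pow_three_ann_eq_bot hu hw huw hu2 hw2
  have h2 : (2 : R) ∈ ann R z.1 :=
    mem_ann.2 (hzd 2 _ (hz.mul_ne_zero hu hw huw) (hz.two_mul_mul_eq_zero hu hw huw hu2 hw2))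
  have h8 : (8 : R) = 0 := by
    have h8 := Ideal.pow_mem_pow h2 3
    rw [hp3, Ideal.mem_bot] at h8
    norm_num at h8
    exact h8
  have : Nontrivial R := ⟨⟨z.1, 0, z.2.1⟩⟩
  refine ⟨⟨ann R z.1, ⟨ann_isPrime_of_forall_mul_eq_zero z.2.1 hzd, z.1, z.2.1, rfl⟩, ?_, hp3⟩,
    ringChar_eq_two_or_four_or_eight h8⟩
  rintro q ⟨hq, y, hy, rfl⟩
  exact ann_eq_of_isPrime hzd hp3 hy hq

theorem stmt11 (R : Type*) [CommRing R] [IsNoetherianRing R]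
    (hcard : 4 ≤ (Set.univ : Set (GammaEV R)).encard)
    (c : GammaEV R)
    (hcenter : ∀ v : GammaEV R, v ≠ c → (gammaE R).Adj c v)
    (hindep : ∀ u v : GammaEV R, u ≠ c → v ≠ c → ¬ (gammaE R).Adj u v) :
    (∃ p : Ideal R, (p.IsPrime ∧ ∃ z : R, z ≠ 0 ∧ p = ann R z) ∧
      (∀ q : Ideal R, (q.IsPrime ∧ ∃ z : R, z ≠ 0 ∧ q = ann R z) → q = p) ∧
      p ^ 3 = ⊥) ∧
    (ringChar R = 2 ∨ ringChar R = 4 ∨ ringChar R = 8) :=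
  stmt11_general R hcard c hcenter hindep
end
end

section
/- There exists a commutative Noetherian ring R such that Γ_E(R) has infinitely many vertices. -/
open scoped Classical

noncomputable section

/-!
In characteristic two the elements `a_b = X + b Y` of `B[X, Y]/(X², Y²) = B[ε][ε]` square to zero,
while `a_b a_c = (b + c) X Y ≠ 0` for `b ≠ c`. Hence `a_b ∈ ann(a_b) \ ann(a_c)`, so an infinite `B`
gives infinitely many annihilator classes. For `B = 𝔽₂[Z]` the ring is finite over the Noetherian
ring `B`, hence Noetherian.
-/

theorem mem_ann_iff {R : Type*} [CommRing R] {x y : R} : y ∈ ann R x ↔ y * x = 0 := by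
  rw [ann, Ideal.mem_torsionOf_iff, smul_eq_mul]

theorem infinite_gammaEV_of_sq_eq_zero {R ι : Type*} [CommRing R] [Infinite ι] (a : ι → R)
    (ha : ∀ i, a i ≠ 0) (hsq : ∀ i, a i * a i = 0) (hmul : ∀ i j, a i * a j = 0 → i = j) :
    Infinite (GammaEV R) := by
  let v : ι → GammaEV R := fun i => cls R ⟨a i, ha i, a i, ha i, hsq i⟩
  refine Infinite.of_injective v fun i j hij => hmul i j ?_
  have hann : ann R (a i) = ann R (a j) := Quotient.exact hij
  rw [← mem_ann_iff, ← hann, mem_ann_iff, hsq]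

instance TrivSqZeroExt.isNoetherianRing (R M : Type*) [CommRing R] [AddCommGroup M] [Module R M]
    [Module Rᵐᵒᵖ M] [IsCentralScalar R M] [IsNoetherianRing R] [Module.Finite R M] :
    IsNoetherianRing (TrivSqZeroExt R M) :=
  have : Module.Finite R (TrivSqZeroExt R M) := Module.Finite.equiv (LinearEquiv.refl R (R × M))
  IsNoetherianRing.of_finite R _

open DualNumber Polynomial TrivSqZeroExt

section

variable {B : Type*} [CommRing B]

theorem eps_add_inl_smul_eps_mul (b c : B) :
    (ε + inl (b • ε) : B[ε][ε]) * (ε + inl (c • ε)) = inr (inr (b + c)) := by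
  ext <;> simp [add_mul, mul_add]

theorem infinite_gammaEV_dualNumber_dualNumber [CharP B 2] [Infinite B] :
    Infinite (GammaEV B[ε][ε]) := by
  have hmul := eps_add_inl_smul_eps_mul (B := B)
  refine infinite_gammaEV_of_sq_eq_zero (fun b : B => ε + inl (b • ε)) (fun b h => ?_)
    (fun b => by rw [hmul, CharTwo.add_self_eq_zero, inr_zero, inr_zero]) (fun b c h => ?_)
  · simpa using congrArg snd h
  · rw [hmul, ← inr_zero, ← inr_zero] at h
    exact CharTwo.add_eq_zero.mp (inr_injective (inr_injective h))

end

theorem stmt14 :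
    ∃ (R : Type) (_ : CommRing R), IsNoetherianRing R ∧ Infinite (GammaEV R) :=
  ⟨(ZMod 2)[X][ε][ε], inferInstance, inferInstance, infinite_gammaEV_dualNumber_dualNumber⟩
end
end
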